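/- The real span I := span{ρ⁻ⁿZ : n ≥ 1} is an Abelian Lie subalgebra of the real Lie algebra K := span{X₊, X₋, X₀} ∪ {ρ⁻ⁿZ : n ≥ 1} (κ = 1, Z = X₊ − X₋), and I is an ideal of K. -/

import Mathlib

noncomputable section

/-- Lie bracket of vector fields on `ℝ³`: `[X,Y] = (DY)X − (DX)Y`. -/
def bracket (X Y : (Fin 3 → ℝ) → (Fin 3 → ℝ)) : (Fin 3 → ℝ) → (Fin 3 → ℝ) :=
  fun p => fderiv ℝ Y p (X p) - fderiv ℝ X p (Y p)

/-- `X₊(ρ,p,u) = (ρ, p, √(p/ρ))` (Euler eigenvector field, κ = 1). -/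
def Xplus : (Fin 3 → ℝ) → (Fin 3 → ℝ) :=
  fun v => ![v 0, v 1, Real.sqrt (v 1 / v 0)]

/-- `X₋(ρ,p,u) = (ρ, p, −√(p/ρ))`. -/
def Xminus : (Fin 3 → ℝ) → (Fin 3 → ℝ) :=
  fun v => ![v 0, v 1, -Real.sqrt (v 1 / v 0)]

/-- `X₀ = (1,0,0)`. -/
def Xzero : (Fin 3 → ℝ) → (Fin 3 → ℝ) := fun _ => ![1, 0, 0]

/-- `Z := X₊ − X₋`. -/
def Z : (Fin 3 → ℝ) → (Fin 3 → ℝ) := fun v => Xplus v - Xminus v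

/-- The vector field `ρ⁻ⁿ Z`. -/
def rhoZ (n : ℕ) : (Fin 3 → ℝ) → (Fin 3 → ℝ) := fun v => (v 0 ^ n)⁻¹ • Z v

/-- `I := span_ℝ {ρ⁻ⁿZ : n ≥ 1}`. -/
def IdealI : Submodule ℝ ((Fin 3 → ℝ) → (Fin 3 → ℝ)) :=
  Submodule.span ℝ {f | ∃ n : ℕ, 1 ≤ n ∧ f = rhoZ n}

/-- `K := span_ℝ ({X₊, X₋, X₀} ∪ {ρ⁻ⁿZ : n ≥ 1})`. -/
def Kalg : Submodule ℝ ((Fin 3 → ℝ) → (Fin 3 → ℝ)) :=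
  Submodule.span ℝ ({Xplus, Xminus, Xzero} ∪ {f | ∃ n : ℕ, 1 ≤ n ∧ f = rhoZ n})

/-! ### Auxiliary machinery -/

abbrev E3 := Fin 3 → ℝ

def pr (i : Fin 3) : E3 →L[ℝ] ℝ := ContinuousLinearMap.proj i

def e2 : E3 := ![0, 0, 1]
def eb0 : E3 := ![1, 0, 0]
def eb1 : E3 := ![0, 1, 0]

/-- The scalar factor of `rhoZ n`. -/
def Gf (n : ℕ) (v : E3) : ℝ := 2 * Real.sqrt (v 1 / v 0) / (v 0) ^ n

def Dg (n : ℕ) (v : E3) : E3 →L[ℝ] ℝ :=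
  ((-(2 * (n : ℝ) + 1)) * Real.sqrt (v 1 / v 0) / (v 0) ^ (n + 1)) • pr 0 +
    (Real.sqrt (v 1 / v 0) / (v 1 * (v 0) ^ n)) • pr 1

lemma Dg_apply (n : ℕ) (v w : E3) :
    Dg n v w = (-(2 * (n : ℝ) + 1)) * Real.sqrt (v 1 / v 0) / (v 0) ^ (n + 1) * w 0 +
      Real.sqrt (v 1 / v 0) / (v 1 * (v 0) ^ n) * w 1 := by
  simp [Dg, pr]

lemma Dg_e2 (n : ℕ) (v : E3) : Dg n v e2 = 0 := by
  simp [Dg_apply, e2]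

lemma hG (m : ℕ) {v : E3} (hv0 : 0 < v 0) (hv1 : 0 < v 1) :
    HasFDerivAt (Gf (m + 1)) (Dg (m + 1) v) v := by
  set n := m + 1 with hn
  have h0 : HasFDerivAt (fun v : E3 => v 0) (pr 0) v := (pr 0).hasFDerivAt
  have h1 : HasFDerivAt (fun v : E3 => v 1) (pr 1) v := (pr 1).hasFDerivAt
  have hinv : HasFDerivAt (fun v : E3 => (v 0)⁻¹) ((-((v 0) ^ 2)⁻¹) • pr 0) v :=
    (hasDerivAt_inv hv0.ne').comp_hasFDerivAt v h0
  have hq : HasFDerivAt (fun v : E3 => v 1 * (v 0)⁻¹)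
      (v 1 • ((-((v 0) ^ 2)⁻¹) • pr 0) + (v 0)⁻¹ • pr 1) v := h1.mul hinv
  have hqpos : 0 < v 1 * (v 0)⁻¹ := mul_pos hv1 (inv_pos.2 hv0)
  have hs := hq.sqrt hqpos.ne'
  have hpow : HasFDerivAt (fun v : E3 => (v 0) ^ n) (((n : ℝ) * (v 0) ^ (n - 1)) • pr 0) v :=
    by
      have := (hasDerivAt_pow n (v 0)).comp_hasFDerivAt v h0
      exact this
  have hpinv : HasFDerivAt (fun v : E3 => ((v 0) ^ n)⁻¹)
      ((-(((v 0) ^ n) ^ 2)⁻¹) • (((n : ℝ) * (v 0) ^ (n - 1)) • pr 0)) v :=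
    (hasDerivAt_inv (pow_ne_zero n hv0.ne')).comp_hasFDerivAt v hpow
  have hmain := (hs.const_mul 2).mul hpinv
  have hfun : Gf n = fun v : E3 => 2 * Real.sqrt (v 1 * (v 0)⁻¹) * ((v 0) ^ n)⁻¹ := by
    funext w; rw [Gf, div_eq_mul_inv, div_eq_mul_inv]
  rw [hfun]
  have hs2 : Real.sqrt (v 1 / v 0) ^ 2 = v 1 / v 0 :=
    Real.sq_sqrt (le_of_lt (div_pos hv1 hv0))
  have hsq : Real.sqrt (v 1 * (v 0)⁻¹) = Real.sqrt (v 1 / v 0) := by rw [div_eq_mul_inv]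
  have hspos : 0 < Real.sqrt (v 1 / v 0) := Real.sqrt_pos.2 (div_pos hv1 hv0)
  have heq : Dg n v = (2 * Real.sqrt (v 1 * (v 0)⁻¹)) •
        (-(((v 0) ^ n) ^ 2)⁻¹ • (((n : ℝ) * (v 0) ^ (n - 1)) • pr 0)) +
      ((v 0) ^ n)⁻¹ • (2 : ℝ) • ((1 / (2 * Real.sqrt (v 1 * (v 0)⁻¹))) •
        (v 1 • ((-((v 0) ^ 2)⁻¹) • pr 0) + (v 0)⁻¹ • pr 1)) := by
    have hy : v 1 = Real.sqrt (v 1 / v 0) ^ 2 * v 0 := by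
      rw [hs2]; field_simp
    ext w
    simp only [Dg, hsq, hn, Nat.add_sub_cancel, ContinuousLinearMap.add_apply,
      ContinuousLinearMap.smul_apply, smul_eq_mul, pr, ContinuousLinearMap.proj_apply]
    rw [hy]
    push_cast
    field_simp
    ring_nf
    have h4 : Real.sqrt (v 0) ^ 4 = v 0 ^ 2 := by
      rw [show (4:ℕ) = 2*2 from rfl, pow_mul, Real.sq_sqrt hv0.le]
    have h4b : Real.sqrt (v 1) ^ 4 = v 1 ^ 2 := by
      rw [show (4:ℕ) = 2*2 from rfl, pow_mul, Real.sq_sqrt hv1.le]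
    simp only [Real.sqrt_sq (Real.sqrt_nonneg (v 1 * (v 0)⁻¹))]
    ring
  rw [heq]
  exact hmain

lemma rhoZ_eq (n : ℕ) : rhoZ n = fun v => Gf n v • e2 := by
  funext v i
  fin_cases i <;>
    simp [rhoZ, Z, Xplus, Xminus, Gf, e2, div_eq_mul_inv] <;> ring

lemma hrhoZ (n : ℕ) {v : E3} (hv0 : 0 < v 0) (hv1 : 0 < v 1) :
    HasFDerivAt (rhoZ (n + 1)) ((Dg (n + 1) v).smulRight e2) v := by
  rw [rhoZ_eq]
  exact (hG n hv0 hv1).smul_const e2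

/-- Representation of elements of `IdealI`. -/
lemma memI_rep {V : E3 → E3} (hV : V ∈ IdealI) :
    ∃ c : ℕ →₀ ℝ, V = ∑ n ∈ c.support, c n • rhoZ (n + 1) := by
  have hset : {f : E3 → E3 | ∃ n : ℕ, 1 ≤ n ∧ f = rhoZ n} =
      Set.range (fun m : ℕ => rhoZ (m + 1)) := by
    ext f
    constructor
    · rintro ⟨n, hn, rfl⟩
      exact ⟨n - 1, by simp only []; rw [Nat.sub_add_cancel hn]⟩
    · rintro ⟨m, rfl⟩
      exact ⟨m + 1, Nat.le_add_left 1 m, rfl⟩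
  rw [IdealI, hset] at hV
  obtain ⟨c, hc⟩ := Finsupp.mem_span_range_iff_exists_finsupp.mp hV
  exact ⟨c, by rw [← hc]; rfl⟩

lemma rhoZ_memI (n : ℕ) : rhoZ (n + 1) ∈ IdealI :=
  Submodule.subset_span ⟨n + 1, Nat.le_add_left 1 n, rfl⟩

/-- HasFDerivAt and pointwise value for represented elements of `I`. -/
lemma keyI (c : ℕ →₀ ℝ) {v : E3} (hv0 : 0 < v 0) (hv1 : 0 < v 1) :
    HasFDerivAt (fun x => ∑ n ∈ c.support, c n • rhoZ (n + 1) x)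
      (∑ n ∈ c.support, c n • (Dg (n + 1) v).smulRight e2) v :=
  HasFDerivAt.fun_sum fun n _ => (hrhoZ n hv0 hv1).const_smul (c n)

lemma sumI_apply (c : ℕ →₀ ℝ) (v : E3) :
    (∑ n ∈ c.support, c n • rhoZ (n + 1)) v =
      (∑ n ∈ c.support, c n * Gf (n + 1) v) • e2 := by
  simp only [Finset.sum_apply, Pi.smul_apply, rhoZ_eq, smul_smul, ← Finset.sum_smul]

lemma LI_e2 (c : ℕ →₀ ℝ) (v : E3) :
    (∑ n ∈ c.support, c n • (Dg (n + 1) v).smulRight e2) e2 = 0 := by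
  simp [ContinuousLinearMap.sum_apply, Dg_e2]

def Ds (v : E3) : E3 →L[ℝ] ℝ :=
  (1 / (2 * Real.sqrt (v 1 * (v 0)⁻¹))) •
    (v 1 • ((-((v 0) ^ 2)⁻¹) • pr 0) + (v 0)⁻¹ • pr 1)

lemma Ds_e2 (v : E3) : Ds v e2 = 0 := by
  simp [Ds, pr, e2]

lemma hasFDerivAt_sV {v : E3} (hv0 : 0 < v 0) (hv1 : 0 < v 1) :
    HasFDerivAt (fun v : E3 => Real.sqrt (v 1 / v 0)) (Ds v) v := by
  have h0 : HasFDerivAt (fun v : E3 => v 0) (pr 0) v := (pr 0).hasFDerivAt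
  have h1 : HasFDerivAt (fun v : E3 => v 1) (pr 1) v := (pr 1).hasFDerivAt
  have hinv : HasFDerivAt (fun v : E3 => (v 0)⁻¹) ((-((v 0) ^ 2)⁻¹) • pr 0) v :=
    (hasDerivAt_inv hv0.ne').comp_hasFDerivAt v h0
  have hq : HasFDerivAt (fun v : E3 => v 1 * (v 0)⁻¹)
      (v 1 • ((-((v 0) ^ 2)⁻¹) • pr 0) + (v 0)⁻¹ • pr 1) v := h1.mul hinv
  have hqpos : 0 < v 1 * (v 0)⁻¹ := mul_pos hv1 (inv_pos.2 hv0)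
  have hfun : (fun v : E3 => Real.sqrt (v 1 / v 0)) =
      fun v : E3 => Real.sqrt (v 1 * (v 0)⁻¹) := by
    funext w; rw [div_eq_mul_inv]
  rw [hfun]
  exact hq.sqrt hqpos.ne'

def DXp (v : E3) : E3 →L[ℝ] E3 :=
  (pr 0).smulRight eb0 + ((pr 1).smulRight eb1 + (Ds v).smulRight e2)

def DXm (v : E3) : E3 →L[ℝ] E3 :=
  (pr 0).smulRight eb0 + ((pr 1).smulRight eb1 + (-(Ds v)).smulRight e2)

lemma e2_0 : e2 0 = 0 := rfl
lemma e2_1 : e2 1 = 0 := rfl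

lemma DXp_e2 (v : E3) : DXp v e2 = 0 := by
  simp [DXp, Ds_e2, pr, e2_0, e2_1]

lemma DXm_e2 (v : E3) : DXm v e2 = 0 := by
  simp [DXm, Ds_e2, pr, e2_0, e2_1]

lemma Xplus_eq : Xplus = fun v : E3 =>
    v 0 • eb0 + (v 1 • eb1 + Real.sqrt (v 1 / v 0) • e2) := by
  funext v i
  fin_cases i <;> simp [Xplus, eb0, eb1, e2]

lemma Xminus_eq : Xminus = fun v : E3 =>
    v 0 • eb0 + (v 1 • eb1 + (-Real.sqrt (v 1 / v 0)) • e2) := by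
  funext v i
  fin_cases i <;> simp [Xminus, eb0, eb1, e2]

lemma hXp {v : E3} (hv0 : 0 < v 0) (hv1 : 0 < v 1) :
    HasFDerivAt Xplus (DXp v) v := by
  rw [Xplus_eq]
  exact (((pr 0).hasFDerivAt.smul_const eb0).add
    (((pr 1).hasFDerivAt.smul_const eb1).add
      ((hasFDerivAt_sV hv0 hv1).smul_const e2)))

lemma hXm {v : E3} (hv0 : 0 < v 0) (hv1 : 0 < v 1) :
    HasFDerivAt Xminus (DXm v) v := by
  rw [Xminus_eq]
  exact (((pr 0).hasFDerivAt.smul_const eb0).add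
    (((pr 1).hasFDerivAt.smul_const eb1).add
      (((hasFDerivAt_sV hv0 hv1).neg).smul_const e2)))

lemma hX0 {v : E3} : HasFDerivAt Xzero (0 : E3 →L[ℝ] E3) v :=
  hasFDerivAt_const _ _

lemma sum_fun_eq (c : ℕ →₀ ℝ) :
    (∑ n ∈ c.support, c n • rhoZ (n + 1)) =
      fun x => ∑ n ∈ c.support, c n • rhoZ (n + 1) x := by
  funext x; simp [Finset.sum_apply]

/-- `I` is contained in `K`, it is Abelian (all brackets within `I` vanish on the
region `ρ > 0, p > 0`), and `I` is an ideal of `K`: the bracket of any element of `K`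
with any element of `I` agrees on the region with an element of `I`. -/
theorem euler_I_abelian_ideal :
    IdealI ≤ Kalg ∧
    (∀ V ∈ IdealI, ∀ W ∈ IdealI, ∀ v : Fin 3 → ℝ, 0 < v 0 → 0 < v 1 →
      bracket V W v = 0) ∧
    (∀ A ∈ Kalg, ∀ V ∈ IdealI, ∃ W ∈ IdealI, ∀ v : Fin 3 → ℝ, 0 < v 0 → 0 < v 1 →
      bracket A V v = W v) := by
  refine ⟨Submodule.span_mono Set.subset_union_right, ?_, ?_⟩
  · -- Abelian
    intro V hV W hW v hv0 hv1
    obtain ⟨c, rfl⟩ := memI_rep hV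
    obtain ⟨d, rfl⟩ := memI_rep hW
    have hVd : HasFDerivAt (∑ n ∈ c.support, c n • rhoZ (n + 1))
        (∑ n ∈ c.support, c n • (Dg (n + 1) v).smulRight e2) v := by
      rw [sum_fun_eq]; exact keyI c hv0 hv1
    have hWd : HasFDerivAt (∑ n ∈ d.support, d n • rhoZ (n + 1))
        (∑ n ∈ d.support, d n • (Dg (n + 1) v).smulRight e2) v := by
      rw [sum_fun_eq]; exact keyI d hv0 hv1
    show fderiv ℝ _ v _ - fderiv ℝ _ v _ = 0
    rw [hVd.fderiv, hWd.fderiv, sumI_apply, sumI_apply, map_smul, map_smul,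
      LI_e2, LI_e2]
    simp
  · -- Ideal
    intro A hA V hV
    obtain ⟨d, rfl⟩ := memI_rep hV
    have hsets : ({Xplus, Xminus, Xzero} : Set (E3 → E3)) ∪
        {f | ∃ n : ℕ, 1 ≤ n ∧ f = rhoZ n} =
        insert Xplus (insert Xminus (insert Xzero {f | ∃ n : ℕ, 1 ≤ n ∧ f = rhoZ n})) := by
      simp [Set.insert_union, Set.singleton_union]
    rw [Kalg, hsets, Submodule.mem_span_insert] at hA
    obtain ⟨a, A1, hA1, rfl⟩ := hA
    rw [Submodule.mem_span_insert] at hA1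
    obtain ⟨b, A2, hA2, rfl⟩ := hA1
    rw [Submodule.mem_span_insert] at hA2
    obtain ⟨c0, U, hU, rfl⟩ := hA2
    obtain ⟨u, rfl⟩ := memI_rep (show U ∈ IdealI from hU)
    refine ⟨∑ n ∈ d.support, d n • ((-(a + b) * ((n : ℝ) + 1)) • rhoZ (n + 1) +
        (-(c0 * (2 * (n : ℝ) + 3) / 2)) • rhoZ (n + 2)), ?_, ?_⟩
    · refine Submodule.sum_mem _ fun n _ => Submodule.smul_mem _ _ ?_
      exact Submodule.add_mem _ (Submodule.smul_mem _ _ (rhoZ_memI n))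
        (Submodule.smul_mem _ _ (show rhoZ (n + 1 + 1) ∈ IdealI from rhoZ_memI (n + 1)))
    intro v hv0 hv1
    have hVd : HasFDerivAt (∑ n ∈ d.support, d n • rhoZ (n + 1))
        (∑ n ∈ d.support, d n • (Dg (n + 1) v).smulRight e2) v := by
      rw [sum_fun_eq]; exact keyI d hv0 hv1
    have hUd : HasFDerivAt (∑ n ∈ u.support, u n • rhoZ (n + 1))
        (∑ n ∈ u.support, u n • (Dg (n + 1) v).smulRight e2) v := by
      rw [sum_fun_eq]; exact keyI u hv0 hv1
    have hAd : HasFDerivAt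
        (a • Xplus + (b • Xminus + (c0 • Xzero + ∑ n ∈ u.support, u n • rhoZ (n + 1))))
        (a • DXp v + (b • DXm v + (c0 • (0 : E3 →L[ℝ] E3) +
          ∑ n ∈ u.support, u n • (Dg (n + 1) v).smulRight e2))) v :=
      ((hXp hv0 hv1).const_smul a).add (((hXm hv0 hv1).const_smul b).add
        ((hX0.const_smul c0).add hUd))
    show fderiv ℝ _ v _ - fderiv ℝ _ v _ = _
    rw [hVd.fderiv, hAd.fderiv]
    rw [sumI_apply d v, map_smul]
    have hLA0 : (a • DXp v + (b • DXm v + (c0 • (0 : E3 →L[ℝ] E3) +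
        ∑ n ∈ u.support, u n • (Dg (n + 1) v).smulRight e2))) e2 = 0 := by
      simp [ContinuousLinearMap.add_apply, ContinuousLinearMap.smul_apply,
        DXp_e2, DXm_e2, Dg_e2]
    rw [hLA0, smul_zero, sub_zero]
    have hU0 : ((∑ n ∈ u.support, u n • rhoZ (n + 1)) v) 0 = 0 := by
      rw [sumI_apply]; simp [Pi.smul_apply, e2_0]
    have hU1 : ((∑ n ∈ u.support, u n • rhoZ (n + 1)) v) 1 = 0 := by
      rw [sumI_apply]; simp [Pi.smul_apply, e2_1]
    set w := (a • Xplus + (b • Xminus + (c0 • Xzero +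
      ∑ n ∈ u.support, u n • rhoZ (n + 1)))) v with hw
    have hw0 : w 0 = (a + b) * v 0 + c0 := by
      rw [hw]
      simp only [Pi.add_apply, Pi.smul_apply, smul_eq_mul, hU0, Xplus, Xminus, Xzero,
        Matrix.cons_val_zero]
      ring
    have hw1 : w 1 = (a + b) * v 1 := by
      rw [hw]
      simp only [Pi.add_apply, Pi.smul_apply, smul_eq_mul, hU1, Xplus, Xminus, Xzero,
        Matrix.cons_val_one, Matrix.head_cons, Matrix.cons_val_zero]
      ring
    simp only [ContinuousLinearMap.coe_sum', Finset.sum_apply,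
      ContinuousLinearMap.coe_smul', Pi.smul_apply,
      ContinuousLinearMap.smulRight_apply, Pi.add_apply, rhoZ_eq]
    refine Finset.sum_congr rfl fun n _ => ?_
    rw [Dg_apply, hw0, hw1]
    simp only [smul_smul, smul_add, ← add_smul]
    congr 1
    simp only [Gf]
    push_cast
    field_simp
    ring
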